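/- Let G be a locally compact Hausdorff topological group and 𝓛 a set of closed subgroups of G that is closed under pairwise intersection and such that for all H, K ∈ 𝓛, the set HK is closed in G and the multiplication map H × K → HK is open onto HK with its subspace topology. For H ∈ 𝓛, let V_H = {f ∘ p_H : f ∈ C₀(G/H)} ⊆ C_b(G), where p_H : G → G/H is the quotient map. Then the family of subspaces (V_H)_{H∈𝓛} of C_b(G) is linearly independent — i.e. every finitely supported family (g_H)_{H∈𝓛} with g_H ∈ V_H and Σ_H g_H = 0 satisfies g_H = 0 for all H — if and only if for all H, K ∈ 𝓛 with K ⊆ H and K ≠ H, the coset space H/K is not compact. -/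

import Mathlib

/-!
If `K < H` and `H/K` is compact, the map `G/K → G/H` is proper, so for `f ∈ C₀(G/H)` with
`f 1 ≠ 0` the function `f ∘ p_H` lies in both `V_H` and `V_K`, and `V_H`, `V_K` are not independent.

Conversely, let `∑ g_H = 0` and let `M` be maximal among the indices. If `g_M x ≠ 0`, then for
every `h ∈ M` some other `g_K (x h)` has size at least `‖g_M x‖ / (n + 1)`. As `g_K` vanishes at
infinity and `M × K → MK` is open, the set of such `h` is compact modulo `M ∩ K`. So `M` is
covered by finitely many sets `C_K (M ∩ K)` with `C_K` compact, and a compact version of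
B. H. Neumann's lemma on coverings by cosets makes some `M/(M ∩ K)` compact, although
`M ∩ K < M` by maximality.
-/

open scoped Pointwise
open Set

def VanishesAtInfinity {X E : Type*} [TopologicalSpace X] [Norm E] (f : X → E) : Prop :=
  ∀ ε : ℝ, 0 < ε → IsCompact {x | ε ≤ ‖f x‖}

section
variable {X Y E : Type*} [TopologicalSpace X] [TopologicalSpace Y]

theorem HasCompactSupport.vanishesAtInfinity [SeminormedAddGroup E] {f : X → E}
    (hf : Continuous f) (hsupp : HasCompactSupport f) : VanishesAtInfinity f := by
  refine fun ε hε => hsupp.of_isClosed_subset (isClosed_le continuous_const hf.norm) ?_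
  intro x hx
  refine subset_tsupport f fun hfx => ?_
  simp only [mem_ofPred_eq, hfx, norm_zero] at hx
  linarith

theorem VanishesAtInfinity.neg [SeminormedAddGroup E] {f : X → E} (hf : VanishesAtInfinity f) :
    VanishesAtInfinity (-f) := by
  simpa only [VanishesAtInfinity, Pi.neg_apply, norm_neg] using hf

theorem IsOpenMap.exists_isCompact_subset_image [WeaklyLocallyCompactSpace X] {f : X → Y}
    (hf : IsOpenMap f) (hsurj : Function.Surjective f) {T : Set Y} (hT : IsCompact T) :
    ∃ C, IsCompact C ∧ T ⊆ f '' C := by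
  choose N hNc hN using exists_compact_mem_nhds (X := X)
  have hcover : T ⊆ ⋃ x, f '' interior (N x) := fun y _ => by
    obtain ⟨x, rfl⟩ := hsurj y
    exact mem_iUnion.2 ⟨x, mem_image_of_mem f (mem_interior_iff_mem_nhds.2 (hN x))⟩
  obtain ⟨F, hF⟩ := hT.elim_finite_subcover _ (fun x => hf _ isOpen_interior) hcover
  refine ⟨⋃ x ∈ F, N x, F.finite_toSet.isCompact_biUnion fun x _ => hNc x, hF.trans ?_⟩
  rw [image_iUnion₂]
  exact iUnion₂_mono fun x _ => image_mono interior_subset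

theorem Finset.exists_norm_sum_div_card_succ_lt_norm {ι : Type*} [SeminormedAddCommGroup E]
    (t : Finset ι) (a : ι → E) (h : 0 < ‖∑ i ∈ t, a i‖) :
    ∃ i ∈ t, ‖∑ i ∈ t, a i‖ / (t.card + 1) < ‖a i‖ := by
  refine Finset.exists_lt_of_sum_lt ?_
  calc ∑ _i ∈ t, ‖∑ i ∈ t, a i‖ / (t.card + 1)
      = t.card / (t.card + 1) * ‖∑ i ∈ t, a i‖ := by
        rw [Finset.sum_const, nsmul_eq_mul]; ring
    _ < ‖∑ i ∈ t, a i‖ := by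
        refine mul_lt_of_lt_one_left h ?_
        rw [div_lt_one (by positivity)]; linarith
    _ ≤ ∑ i ∈ t, ‖a i‖ := norm_sum_le _ _

theorem exists_continuous_vanishesAtInfinity_ne_zero {𝕜 : Type*} [RCLike 𝕜] [RegularSpace X]
    [LocallyCompactSpace X] (x : X) :
    ∃ f : X → 𝕜, Continuous f ∧ VanishesAtInfinity f ∧ f x ≠ 0 := by
  obtain ⟨f, hf, -, hfx⟩ := exists_continuous_nonneg_pos x
  have hcont : Continuous fun y => (f y : 𝕜) := by fun_prop
  exact ⟨fun y => (f y : 𝕜), hcont, (hf.comp_left RCLike.ofReal_zero).vanishesAtInfinity hcont,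
    by simpa using hfx⟩

end

section
variable {G : Type*} [Group G] [TopologicalSpace G]

theorem QuotientGroup.exists_isCompact_preimage_subset_mul [ContinuousMul G]
    [WeaklyLocallyCompactSpace G]
    (K : Subgroup G) {T : Set (G ⧸ K)} (hT : IsCompact T) :
    ∃ C : Set G, IsCompact C ∧ (QuotientGroup.mk : G → G ⧸ K) ⁻¹' T ⊆ C * K := by
  obtain ⟨C, hC, hTC⟩ := (QuotientGroup.isOpenMap_coe (N := K)).exists_isCompact_subset_image
    QuotientGroup.mk_surjective hT
  exact ⟨C, hC, (preimage_mono hTC).trans (QuotientGroup.preimage_image_mk_eq_mul K C).subset⟩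

theorem QuotientGroup.isCompact_image_mk_of_subset_mul {L M : Subgroup G} (hLM : L ≤ M)
    (hM : IsClosed (M : Set G)) {D : Set G} (hD : IsCompact D) (hMD : (M : Set G) ⊆ D * L) :
    IsCompact ((QuotientGroup.mk : G → G ⧸ L) '' M) := by
  convert (hD.inter_right hM).image QuotientGroup.continuous_mk using 1
  refine (image_mono inter_subset_right).antisymm' ?_
  rintro _ ⟨m, hm, rfl⟩
  obtain ⟨d, hd, l, hl, rfl⟩ := hMD hm
  refine ⟨d, ⟨hd, ?_⟩, (QuotientGroup.mk_mul_of_mem d hl).symm⟩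
  simpa using M.mul_mem hm (hLM (L.inv_mem hl))

namespace Subgroup

theorem exists_isCompact_subset_mul_of_subset_biUnion [ContinuousMul G] {ι : Type*}
    {M : Subgroup G} {L : ι → Subgroup G} (t : Finset ι) (hLM : ∀ i ∈ t, L i ≤ M)
    {C : ι → Set G} (hC : ∀ i ∈ t, IsCompact (C i)) (hcover : (M : Set G) ⊆ ⋃ i ∈ t, C i * L i) :
    ∃ i ∈ t, ∃ D : Set G, IsCompact D ∧ (M : Set G) ⊆ D * L i := by
  classical
  induction t using Finset.induction_on generalizing C with
  | empty => simpa using hcover M.one_mem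
  | insert i₀ t _ ih =>
    have hi₀ : i₀ ∈ insert i₀ t := t.mem_insert_self i₀
    have ht : ∀ {i}, i ∈ t → i ∈ insert i₀ t := Finset.mem_insert_of_mem
    by_cases hM : (M : Set G) ⊆ C i₀ * L i₀
    · exact ⟨i₀, hi₀, C i₀, hC i₀ hi₀, hM⟩
    obtain ⟨x, hxM, hx⟩ := not_subset.1 hM
    -- the coset `x L i₀` misses `C i₀ * L i₀`, so the other sets cover it
    have hcoset : ∀ l ∈ L i₀, x * l ∈ ⋃ i ∈ t, C i * (L i : Set G) := by
      intro l hl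
      obtain ⟨i, hi, c, hc, l', hl', hcl⟩ :=
        mem_iUnion₂.1 (hcover (M.mul_mem hxM (hLM i₀ hi₀ hl)))
      rcases Finset.mem_insert.1 hi with rfl | hi
      · refine absurd ⟨c, hc, l' * l⁻¹, mul_mem hl' (inv_mem hl), ?_⟩ hx
        simp only at hcl ⊢
        rw [← mul_assoc, hcl, mul_inv_cancel_right]
      · exact mem_iUnion₂.2 ⟨i, hi, c, hc, l', hl', hcl⟩
    have hC' : ∀ i ∈ t, IsCompact (C i ∪ C i₀ * {x⁻¹} * C i) := fun i hi =>
      (hC i (ht hi)).union (((hC i₀ hi₀).mul isCompact_singleton).mul (hC i (ht hi)))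
    have hcover' : (M : Set G) ⊆ ⋃ i ∈ t, (C i ∪ C i₀ * {x⁻¹} * C i) * L i := by
      intro m hm
      obtain ⟨i, hi, c, hc, l, hl, rfl⟩ := mem_iUnion₂.1 (hcover hm)
      rcases Finset.mem_insert.1 hi with rfl | hi
      · obtain ⟨j, hj, c', hc', l', hl', hcl⟩ := mem_iUnion₂.1 (hcoset l hl)
        refine mem_iUnion₂.2 ⟨j, hj, c * x⁻¹ * c', .inr (mul_mem_mul (mul_mem_mul hc rfl) hc'),
          l', hl', ?_⟩
        simp only at hcl ⊢
        rw [mul_assoc _ c', hcl]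
        group
      · exact mem_iUnion₂.2 ⟨i, hi, mul_mem_mul (.inl hc) hl⟩
    obtain ⟨i, hi, D, hD, hMD⟩ := ih (fun i hi => hLM i (ht hi)) hC' hcover'
    exact ⟨i, ht hi, D, hD, hMD⟩

theorem continuous_quotientMapOfLE {K H : Subgroup G} (hKH : K ≤ H) :
    Continuous (quotientMapOfLE hKH) :=
  (QuotientGroup.isQuotientMap_mk K).continuous_iff.2 QuotientGroup.continuous_mk

theorem vanishesAtInfinity_comp_quotientMapOfLE [ContinuousMul G] [WeaklyLocallyCompactSpace G]
    {E : Type*} [SeminormedAddGroup E] {K H : Subgroup G} (hKH : K ≤ H)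
    (hcomp : IsCompact ((QuotientGroup.mk : G → G ⧸ K) '' H)) {f : G ⧸ H → E}
    (hf : Continuous f) (hf0 : VanishesAtInfinity f) :
    VanishesAtInfinity (f ∘ quotientMapOfLE hKH) := by
  intro ε hε
  obtain ⟨C, hC, hTC⟩ := QuotientGroup.exists_isCompact_preimage_subset_mul H (hf0 ε hε)
  refine ((hC.prod hcomp).image continuous_smul).of_isClosed_subset
    (isClosed_le continuous_const (hf.comp (continuous_quotientMapOfLE hKH)).norm) ?_
  rintro ⟨x⟩ hx
  obtain ⟨c, hc, h, hh, rfl⟩ := hTC hx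
  exact ⟨(c, h), ⟨hc, h, hh, rfl⟩, rfl⟩

def mulToSetMul (H K : Subgroup G) : H × K → ((H : Set G) * (K : Set G) : Set G) :=
  fun p => ⟨p.1 * p.2, mul_mem_mul p.1.2 p.2.2⟩

theorem exists_isCompact_inter_mul_subset [IsTopologicalGroup G] [LocallyCompactSpace G]
    {H K : Subgroup G}    (hH : IsClosed (H : Set G)) (hK : IsClosed (K : Set G))
    (hHK : IsClosed ((H : Set G) * (K : Set G))) (hopen : IsOpenMap (mulToSetMul H K))
    {B : Set G} (hB : IsCompact B) :
    ∃ C : Set G, IsCompact C ∧ (H : Set G) ∩ (B * (K : Set G)) ⊆ C * (H ⊓ K : Subgroup G) := by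
  have := hH.isClosedEmbedding_subtypeVal.locallyCompactSpace
  have := hK.isClosedEmbedding_subtypeVal.locallyCompactSpace
  have hsurj : Function.Surjective (mulToSetMul H K) := by
    rintro ⟨_, h, hh, k, hk, rfl⟩
    exact ⟨(⟨h, hh⟩, ⟨k, hk⟩), rfl⟩
  obtain ⟨P, hP, hBP⟩ := hopen.exists_isCompact_subset_image hsurj
    (hHK.isClosedEmbedding_subtypeVal.isCompact_preimage hB)
  refine ⟨(fun p : H × K => (p.1 : G)) '' P, hP.image (by fun_prop), ?_⟩
  rintro _ ⟨hbk, b, hb, k, hk, rfl⟩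
  have hbHK : b ∈ (H : Set G) * (K : Set G) :=
    ⟨b * k, hbk, k⁻¹, inv_mem hk, mul_inv_cancel_right b k⟩
  obtain ⟨⟨u, v⟩, huv, huvb⟩ :=
    hBP (show (⟨b, hbHK⟩ : ((H : Set G) * (K : Set G) : Set G)) ∈ _ from hb)
  replace huvb : (u : G) * v = b := congrArg Subtype.val huvb
  refine ⟨u, ⟨_, huv, rfl⟩, u⁻¹ * (b * k), mem_inf.2 ⟨mul_mem (inv_mem u.2) hbk, ?_⟩,
    mul_inv_cancel_left _ _⟩
  rw [← huvb, mul_assoc]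
  simpa using mul_mem v.2 hk

theorem eq_zero_of_sum_eq_zero_of_not_isCompact [IsTopologicalGroup G] [LocallyCompactSpace G]
    {E : Type*} [NormedAddCommGroup E] {s : Finset (Subgroup G)} {M : Subgroup G} (hM : M ∈ s)
    (hclosed : ∀ K ∈ s, IsClosed (K : Set G))
    (hprod : ∀ K ∈ s, IsClosed ((M : Set G) * (K : Set G)) ∧ IsOpenMap (mulToSetMul M K))
    (hnc : ∀ K ∈ s, K ≠ M → ¬ IsCompact ((QuotientGroup.mk : G → G ⧸ (M ⊓ K)) '' M))
    (f : (K : Subgroup G) → G ⧸ K → E) (hf : ∀ K ∈ s, VanishesAtInfinity (f K))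
    (hsum : ∀ x : G, ∑ K ∈ s, f K x = 0) : f M = 0 := by
  classical
  funext y
  obtain ⟨x, rfl⟩ := QuotientGroup.mk_surjective y
  by_contra hx
  set t := s.erase M
  set δ := ‖f M x‖ / (t.card + 1)
  have hδ : 0 < δ := div_pos (norm_pos_iff.2 hx) (by positivity)
  have hlarge : ∀ h ∈ M, ∃ K ∈ t, δ < ‖f K (x * h : G)‖ := by
    intro h hh
    have hrest : ∑ K ∈ t, f K (x * h : G) = -f M x := by
      rw [Finset.sum_erase_eq_sub hM, hsum, zero_sub, QuotientGroup.mk_mul_of_mem x hh]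
    simpa only [hrest, norm_neg] using
      t.exists_norm_sum_div_card_succ_lt_norm (fun K => f K (x * h : G))
        (by rwa [hrest, norm_neg, norm_pos_iff])
  have hlevel : ∀ K ∈ t, ∃ C : Set G, IsCompact C ∧
      {h | h ∈ M ∧ δ ≤ ‖f K (x * h : G)‖} ⊆ C * (M ⊓ K : Subgroup G) := by
    intro K hK
    have hKs := Finset.mem_of_mem_erase hK
    obtain ⟨C₀, hC₀, hTC₀⟩ := QuotientGroup.exists_isCompact_preimage_subset_mul K (hf K hKs δ hδ)
    obtain ⟨C, hC, hsub⟩ := exists_isCompact_inter_mul_subset (hclosed M hM) (hclosed K hKs)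
      (hprod K hKs).1 (hprod K hKs).2 (isCompact_singleton.mul hC₀ : IsCompact ({x⁻¹} * C₀))
    refine ⟨C, hC, fun h ⟨hh, hhδ⟩ => hsub ⟨hh, ?_⟩⟩
    obtain ⟨c, hc, k, hk, hck⟩ := hTC₀ hhδ
    refine ⟨x⁻¹ * c, mul_mem_mul rfl hc, k, hk, ?_⟩
    simp only at hck ⊢
    rw [mul_assoc, hck, inv_mul_cancel_left]
  choose! C hC hCsub using hlevel
  have hcover : (M : Set G) ⊆ ⋃ K ∈ t, C K * (M ⊓ K : Subgroup G) := fun h hh => by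
    obtain ⟨K, hK, hKδ⟩ := hlarge h hh
    exact mem_iUnion₂.2 ⟨K, hK, hCsub K hK ⟨hh, hKδ.le⟩⟩
  obtain ⟨K, hK, D, hD, hMD⟩ :=
    exists_isCompact_subset_mul_of_subset_biUnion t (fun K _ => inf_le_left) hC hcover
  exact hnc K (Finset.mem_of_mem_erase hK) (Finset.ne_of_mem_erase hK)
    (QuotientGroup.isCompact_image_mk_of_subset_mul inf_le_left (hclosed M hM) hD hMD)

theorem eq_zero_of_sum_eq_zero [IsTopologicalGroup G] [LocallyCompactSpace G] {E : Type*}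
    [NormedAddCommGroup E] (𝓛 : Set (Subgroup G)) (h_closed : ∀ H ∈ 𝓛, IsClosed (H : Set G))
    (h_inter : ∀ H ∈ 𝓛, ∀ K ∈ 𝓛, H ⊓ K ∈ 𝓛)
    (h_prod : ∀ H ∈ 𝓛, ∀ K ∈ 𝓛,
      IsClosed ((H : Set G) * (K : Set G)) ∧ IsOpenMap (mulToSetMul H K))
    (hnc : ∀ H ∈ 𝓛, ∀ K ∈ 𝓛, K ≤ H → K ≠ H →
      ¬ IsCompact ((QuotientGroup.mk : G → G ⧸ K) '' (H : Set G)))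
    {s : Finset (Subgroup G)} (hs : (s : Set (Subgroup G)) ⊆ 𝓛)
    (f : (K : Subgroup G) → G ⧸ K → E) (hf : ∀ K ∈ s, VanishesAtInfinity (f K))
    (hsum : ∀ x : G, ∑ K ∈ s, f K x = 0) : ∀ K ∈ s, f K = 0 := by
  classical
  induction s using Finset.strongInduction with
  | H s ih =>
  intro K hK
  obtain ⟨M, hMmax⟩ := s.exists_maximal ⟨K, hK⟩
  have hMs : M ∈ s := hMmax.prop
  have hfM : f M = 0 := by
    refine eq_zero_of_sum_eq_zero_of_not_isCompact hMs (fun L hL => h_closed L (hs hL))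
      (fun L hL => h_prod M (hs hMs) L (hs hL)) (fun L hL hLM => ?_) f hf hsum
    refine hnc M (hs hMs) (M ⊓ L) (h_inter M (hs hMs) L (hs hL)) inf_le_left fun hML => hLM ?_
    exact hMmax.eq_of_ge hL (hML ▸ inf_le_right)
  by_cases hKM : K = M
  · exact hKM ▸ hfM
  refine ih (s.erase M) (Finset.erase_ssubset hMs) (fun L hL => hs (Finset.mem_of_mem_erase hL))
    (fun L hL => hf L (Finset.mem_of_mem_erase hL)) (fun x => ?_) K (Finset.mem_erase.2 ⟨hKM, hK⟩)
  rw [Finset.sum_erase_eq_sub hMs, hsum, hfM, Pi.zero_apply, sub_zero]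

end Subgroup

end

theorem stmt_19_general
    {G : Type*} [Group G] [TopologicalSpace G] [IsTopologicalGroup G]
    [LocallyCompactSpace G]
    (𝓛 : Set (Subgroup G))
    (h_closed : ∀ H ∈ 𝓛, IsClosed (H : Set G))
    (h_inter : ∀ H ∈ 𝓛, ∀ K ∈ 𝓛, H ⊓ K ∈ 𝓛)
    (h_prod : ∀ H ∈ 𝓛, ∀ K ∈ 𝓛, IsClosed ((H : Set G) * (K : Set G)) ∧
        IsOpenMap (fun p : H × K =>
          (⟨(p.1 : G) * (p.2 : G), Set.mul_mem_mul p.1.2 p.2.2⟩ :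
            ((H : Set G) * (K : Set G) : Set G))))
    (V : Subgroup G → Set (G → ℂ))
    (hV : ∀ H : Subgroup G, V H = {g : G → ℂ | ∃ f : G ⧸ H → ℂ, Continuous f ∧
        (∀ ε : ℝ, 0 < ε → IsCompact {x : G ⧸ H | ε ≤ ‖f x‖}) ∧
        g = f ∘ (QuotientGroup.mk : G → G ⧸ H)}) :
    (∀ (s : Finset (Subgroup G)), (↑s : Set (Subgroup G)) ⊆ 𝓛 →
      ∀ g : Subgroup G → (G → ℂ), (∀ H ∈ s, g H ∈ V H) →
        ∑ H ∈ s, g H = 0 → ∀ H ∈ s, g H = 0) ↔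
    (∀ H ∈ 𝓛, ∀ K ∈ 𝓛, K ≤ H → K ≠ H →
      ¬ IsCompact ((QuotientGroup.mk : G → G ⧸ K) '' (H : Set G))) := by
  classical
  refine ⟨fun hindep H hH K hK hKH hne hcomp => ?_, fun hnc s hs g hg hsum => ?_⟩
  · -- closedness of `H` makes `G ⧸ H` Hausdorff, hence regular
    have : IsClosed (H : Set G) := h_closed H hH
    obtain ⟨f, hfc, hf0, hf1⟩ :=
      exists_continuous_vanishesAtInfinity_ne_zero (𝕜 := ℂ) ((1 : G) : G ⧸ H)
    set φ : G → ℂ := f ∘ QuotientGroup.mk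
    have hφ : φ ∈ V H := (hV H).symm ▸ ⟨f, hfc, hf0, rfl⟩
    have hnegφ : -φ ∈ V K := (hV K).symm ▸ ⟨-(f ∘ Subgroup.quotientMapOfLE hKH),
      (hfc.comp (Subgroup.continuous_quotientMapOfLE hKH)).neg,
      (Subgroup.vanishesAtInfinity_comp_quotientMapOfLE hKH hcomp hfc hf0).neg, rfl⟩
    have hrel := hindep {H, K} (by simp [Set.insert_subset_iff, hH, hK])
      (fun L => if L = H then φ else -φ) (by simp [hφ, hne, hnegφ])
      (by rw [Finset.sum_pair hne.symm]; simp [hne]) H (by simp)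
    exact hf1 (by simpa [φ] using congrFun hrel 1)
  · have hfac : ∀ H ∈ s, ∃ f : G ⧸ H → ℂ, VanishesAtInfinity f ∧ g H = f ∘ QuotientGroup.mk :=
      fun H hH => by
        obtain ⟨f, -, hf0, hgf⟩ := (hV H) ▸ hg H hH
        exact ⟨f, hf0, hgf⟩
    choose! f hf hgf using hfac
    have hsum' : ∀ x : G, ∑ H ∈ s, f H x = 0 := fun x => by
      have hx : ∑ H ∈ s, g H x = 0 := by
        simpa only [Finset.sum_apply, Pi.zero_apply] using congrFun hsum x
      rw [← hx]
      exact Finset.sum_congr rfl fun H hH => by rw [hgf H hH]; rfl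
    intro H hH
    rw [hgf H hH, Subgroup.eq_zero_of_sum_eq_zero 𝓛 h_closed h_inter h_prod hnc hs f hf hsum' H hH]
    rfl

theorem stmt_19
    {G : Type*} [Group G] [TopologicalSpace G] [IsTopologicalGroup G]
    [LocallyCompactSpace G] [T2Space G]
    (𝓛 : Set (Subgroup G))
    (h_closed : ∀ H ∈ 𝓛, IsClosed (H : Set G))
    (h_inter : ∀ H ∈ 𝓛, ∀ K ∈ 𝓛, H ⊓ K ∈ 𝓛)
    (h_prod : ∀ H ∈ 𝓛, ∀ K ∈ 𝓛, IsClosed ((H : Set G) * (K : Set G)) ∧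
        IsOpenMap (fun p : H × K =>
          (⟨(p.1 : G) * (p.2 : G), Set.mul_mem_mul p.1.2 p.2.2⟩ :
            ((H : Set G) * (K : Set G) : Set G))))
    (V : Subgroup G → Set (G → ℂ))
    (hV : ∀ H : Subgroup G, V H = {g : G → ℂ | ∃ f : G ⧸ H → ℂ, Continuous f ∧
        (∀ ε : ℝ, 0 < ε → IsCompact {x : G ⧸ H | ε ≤ ‖f x‖}) ∧
        g = f ∘ (QuotientGroup.mk : G → G ⧸ H)}) :
    (∀ (s : Finset (Subgroup G)), (↑s : Set (Subgroup G)) ⊆ 𝓛 →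
      ∀ g : Subgroup G → (G → ℂ), (∀ H ∈ s, g H ∈ V H) →
        ∑ H ∈ s, g H = 0 → ∀ H ∈ s, g H = 0) ↔
    (∀ H ∈ 𝓛, ∀ K ∈ 𝓛, K ≤ H → K ≠ H →
      ¬ IsCompact ((QuotientGroup.mk : G → G ⧸ K) '' (H : Set G))) :=
  stmt_19_general 𝓛 h_closed h_inter h_prod V hV
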